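/- Let s ≥ 1, s₀ > 7/2, ε ∈ [0,1], and define p = 2(s+2)/(2(s+2)−4), q = 2(s+2)/4. Then there exists C = C(s₀,s) > 0 such that for all u, v ∈ H^{max(s+2,s₀)}(𝕋), with w = u−v: |ε ∫ ∂_x⁴u · (HD^s w)(HD^{s−1}w) dx| ≤ (ε^p/100)‖D^{s+2}w‖² + C‖u‖_{H^{s₀}}^q ‖w‖² + C‖u‖_{H^{s₀}}‖w‖_{H^s}². -/

import Mathlib

open MeasureTheory Real Complex AddCircle
open scoped BigOperators ENNReal

noncomputable section

instance : Fact (0 < 2 * Real.pi) := ⟨by positivity⟩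

/-- The torus `ℝ/2πℤ`. -/
abbrev Torus := AddCircle (2 * Real.pi)

/-- Fourier coefficient of a real-valued function on the torus
(with respect to the normalized Haar measure). -/
def FC (f : Torus → ℝ) (n : ℤ) : ℂ :=
  fourierCoeff (fun x => (f x : ℂ)) n

/-- Inhomogeneous Sobolev `H^s` norm, via Fourier coefficients:
`‖f‖_{H^s} = ( ∑ ⟨n⟩^{2s} |f̂(n)|² )^{1/2}`. -/
def HsNorm (s : ℝ) (f : Torus → ℝ) : ℝ :=
  Real.sqrt (∑' n : ℤ, ((1 + (n : ℝ) ^ 2) ^ s) * ‖FC f n‖ ^ 2)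

/-- Homogeneous Sobolev norm `‖D^s f‖_{L²} = ( ∑ |n|^{2s} |f̂(n)|² )^{1/2}`,
where `D = 𝓕⁻¹ |ξ| 𝓕`. -/
def DsNorm (s : ℝ) (f : Torus → ℝ) : ℝ :=
  Real.sqrt (∑' n : ℤ, (|(n : ℝ)| ^ (2 * s)) * ‖FC f n‖ ^ 2)

/-- Membership in `H^s(𝕋)` (finiteness of the Sobolev sum). -/
def MemHs (s : ℝ) (f : Torus → ℝ) : Prop :=
  Summable (fun n : ℤ => ((1 + (n : ℝ) ^ 2) ^ s) * ‖FC f n‖ ^ 2)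

/-- `g` is the image of `f` under the Fourier multiplier with symbol `m`. -/
def HasSymbol (m : ℤ → ℂ) (f g : Torus → ℝ) : Prop :=
  ∀ n : ℤ, FC g n = m n * FC f n

/-- Symbol of the Hilbert transform `H`: `-i sgn(n)`. -/
def symH (n : ℤ) : ℂ := -Complex.I * (Int.sign n : ℂ)

/-- Symbol of `D^s = 𝓕⁻¹|ξ|^s𝓕`. -/
def symD (s : ℝ) (n : ℤ) : ℂ := ((|(n : ℝ)| ^ s : ℝ) : ℂ)

/-- Symbol of `∂ₓ`. -/
def symDx (n : ℤ) : ℂ := Complex.I * (n : ℂ)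

/-- Symbol of the smoothed antiderivative `J`: `ψ(ξ)/|ξ|`. -/
def symJ (ψ : ℝ → ℝ) (n : ℤ) : ℂ := ((ψ n / |(n : ℝ)| : ℝ) : ℂ)

/-- `ψ` is a smooth cutoff: `0 ≤ ψ ≤ 1`, `ψ = 1` on `|ξ| ≥ 2`, `ψ = 0` on `|ξ| ≤ 1`. -/
def IsCutoff (ψ : ℝ → ℝ) : Prop :=
  ContDiff ℝ (⊤ : ℕ∞) ψ ∧ (∀ x, 0 ≤ ψ x) ∧ (∀ x, ψ x ≤ 1) ∧
    (∀ x, 2 ≤ |x| → ψ x = 1) ∧ (∀ x, |x| ≤ 1 → ψ x = 0)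

/-- Rapid decay of Fourier coefficients (a model for "sufficiently smooth"). -/
def SmoothFC (f : Torus → ℝ) : Prop :=
  ∀ k : ℕ, Summable (fun n : ℤ => |(n : ℝ)| ^ k * ‖FC f n‖)

/-- `L²` pairing `⟨f, g⟩ = ∫ f g`. -/
def inn (f g : Torus → ℝ) : ℝ := ∫ x : Torus, f x * g x ∂haarAddCircle

/-- Trilinear integral `∫ f g h`. -/
def inn3 (f g h : Torus → ℝ) : ℝ := ∫ x : Torus, f x * g x * h x ∂haarAddCircle

/-- Quadrilinear integral `∫ f g h k`. -/
def inn4 (f g h k : Torus → ℝ) : ℝ :=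
  ∫ x : Torus, f x * g x * h x * k x ∂haarAddCircle


set_option maxHeartbeats 1000000

namespace Aux15

/-- Hölder for `tsum`s over `ℤ` in `ℝ≥0∞`. -/
lemma holder (f g : ℤ → ℝ≥0∞) {p q : ℝ} (hpq : p.HolderConjugate q) :
    (∑' n, f n * g n) ≤ (∑' n, f n ^ p) ^ (1/p) * (∑' n, g n ^ q) ^ (1/q) := by
  have h := ENNReal.lintegral_mul_le_Lp_mul_Lq (Measure.count (α := ℤ)) hpq
    (f := f) (g := g) (by measurability) (by measurability)
  simpa [lintegral_count] using h

/-- Cauchy–Schwarz for `tsum`s over `ℤ` in `ℝ≥0∞`. -/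
lemma cauchy_schwarz (f g : ℤ → ℝ≥0∞) :
    (∑' n, f n * g n) ≤ (∑' n, f n ^ (2:ℝ)) ^ (1/2:ℝ) * (∑' n, g n ^ (2:ℝ)) ^ (1/2:ℝ) := by
  have h := holder f g ((Real.holderConjugate_iff (p := 2) (q := 2)).2 ⟨by norm_num, by norm_num⟩)
  simpa using h

/-- Interpolation for `tsum`s in `ℝ≥0∞`. -/
lemma interp (X Y : ℤ → ℝ≥0∞) {θ : ℝ} (h0 : 0 ≤ θ) (h1 : θ ≤ 1) :
    (∑' n, X n ^ θ * Y n ^ (1-θ)) ≤ (∑' n, X n) ^ θ * (∑' n, Y n) ^ (1-θ) := by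
  rcases eq_or_lt_of_le h0 with h|h0'
  · simp [← h]
  rcases eq_or_lt_of_le h1 with h|h1'
  · simp [h]
  have hpq : (1/θ).HolderConjugate (1/(1-θ)) := by
    rw [Real.holderConjugate_iff]; constructor
    · rw [lt_div_iff₀ h0']; linarith
    · rw [one_div, one_div, inv_inv, inv_inv]; ring
  have h := holder (fun n => X n ^ θ) (fun n => Y n ^ (1-θ)) hpq
  simp only [← ENNReal.rpow_mul, one_div_one_div] at h
  rw [mul_one_div_cancel h0'.ne', mul_one_div_cancel (by linarith : (1:ℝ)-θ ≠ 0)] at h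
  simpa using h

/-- Norm of a complex tsum vs `ℝ≥0∞` tsum of norms, unconditional. -/
lemma enorm_tsum_le (f : ℤ → ℂ) : (‖∑' n, f n‖₊ : ℝ≥0∞) ≤ ∑' n, (‖f n‖₊ : ℝ≥0∞) := by
  by_cases h : Summable f
  · have hn : Summable fun n => ‖f n‖ := (summable_norm_iff).2 h
    have hnn : Summable fun n => ‖f n‖₊ := by rw [← NNReal.summable_coe]; exact hn
    rw [← ENNReal.coe_tsum hnn, ENNReal.coe_le_coe, ← NNReal.coe_le_coe, coe_nnnorm,
      NNReal.coe_tsum]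
    simpa [coe_nnnorm] using (norm_tsum_le_tsum_norm hn)
  · simp [tsum_eq_zero_of_not_summable h]

lemma ofReal_norm_eq_coe_nnnorm {E : Type*} [SeminormedAddCommGroup E] (a : E) :
    ENNReal.ofReal ‖a‖ = (‖a‖₊ : ℝ≥0∞) := ofReal_norm a

lemma ofReal_rpow {x t : ℝ} (hx : 0 ≤ x) (ht : 0 ≤ t) :
    ENNReal.ofReal x ^ t = ENNReal.ofReal (x ^ t) :=
  ENNReal.ofReal_rpow_of_nonneg hx ht

/-- Summability of `(1+n²)^t` over `ℤ` for `t < -1/2`. -/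
lemma summable_jp {t : ℝ} (ht : t < -(1/2)) :
    Summable (fun n : ℤ => (1 + (n:ℝ)^2) ^ t) := by
  have key : Summable (fun n : ℕ => (1 + (n:ℝ)^2) ^ t) := by
    have h2t : (2*t) < -1 := by linarith
    have h1 : Summable (fun n : ℕ => ((n:ℝ)) ^ (2*t)) := Real.summable_nat_rpow.2 h2t
    have h2 : Summable (fun n : ℕ => (((n+1:ℕ)):ℝ) ^ (2*t)) :=
      h1.comp_injective (add_left_injective 1)
    apply Summable.of_nonneg_of_le (fun n => Real.rpow_nonneg (by positivity) t)
      (fun n => ?_) (h2.mul_left ((2:ℝ) ^ (-t)))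
    have hb : ((n+1:ℕ):ℝ)^2 / 2 ≤ 1 + (n:ℝ)^2 := by push_cast; nlinarith [sq_nonneg ((n:ℝ)-1)]
    have hpos : (0:ℝ) < ((n+1:ℕ):ℝ)^2 / 2 := by positivity
    calc (1 + (n:ℝ)^2) ^ t ≤ (((n+1:ℕ):ℝ)^2 / 2) ^ t := by
          apply Real.rpow_le_rpow_of_nonpos hpos hb (by linarith)
      _ = 2^(-t) * (((n+1:ℕ)):ℝ) ^ (2*t) := by
          rw [Real.div_rpow (by positivity) (by norm_num), Real.rpow_neg (by norm_num),
            ← Real.rpow_natCast (((n+1:ℕ)):ℝ) 2, ← Real.rpow_mul (by positivity)]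
          rw [div_eq_mul_inv, mul_comm]
          norm_num [mul_comm]
  apply Summable.of_nat_of_neg
  · exact key.congr (by intro n; push_cast; ring_nf)
  · exact key.congr (by intro n; push_cast; ring_nf)

lemma FC_sub {u v : Torus → ℝ} (hu : Continuous u) (hv : Continuous v) (n : ℤ) :
    FC (fun x => u x - v x) n = FC u n - FC v n := by
  have hiu : Integrable (fun t : Torus => fourier (-n) t • ((u t : ℂ))) haarAddCircle := by
    apply Continuous.integrable_of_hasCompactSupport
    · exact (map_continuous (fourier (-n))).smul (Complex.continuous_ofReal.comp hu)
    · exact HasCompactSupport.of_compactSpace _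
  have hiv : Integrable (fun t : Torus => fourier (-n) t • ((v t : ℂ))) haarAddCircle := by
    apply Continuous.integrable_of_hasCompactSupport
    · exact (map_continuous (fourier (-n))).smul (Complex.continuous_ofReal.comp hv)
    · exact HasCompactSupport.of_compactSpace _
  simp only [FC, fourierCoeff]
  rw [← integral_sub hiu hiv]
  congr 1
  ext t
  push_cast
  rw [← smul_sub]

def An (n : ℤ) : ℝ≥0∞ := ENNReal.ofReal |(n:ℝ)|
def Jn (n : ℤ) : ℝ≥0∞ := ENNReal.ofReal (1 + (n:ℝ)^2)
def Wf (f : Torus → ℝ) (n : ℤ) : ℝ≥0∞ := ENNReal.ofReal ‖FC f n‖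

lemma Jn_ne_zero (n : ℤ) : Jn n ≠ 0 := by
  simp only [Jn, ne_eq, ENNReal.ofReal_eq_zero, not_le]; positivity

lemma Jn_ne_top (n : ℤ) : Jn n ≠ ⊤ := ENNReal.ofReal_ne_top

lemma abs_rpow_le (n : ℤ) {t : ℝ} (ht : 0 ≤ t) :
    |(n:ℝ)| ^ (2*t) ≤ (1 + (n:ℝ)^2) ^ t := by
  have h1 : |(n:ℝ)| ^ (2*t) = ((n:ℝ)^2) ^ t := by
    rw [← _root_.sq_abs, ← Real.rpow_natCast |(n:ℝ)| 2, ← Real.rpow_mul (abs_nonneg _)]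
    norm_num
  rw [h1]
  exact Real.rpow_le_rpow (by positivity) (by nlinarith) ht

lemma memHs_mono {t t' : ℝ} (h : t ≤ t') {f : Torus → ℝ} (hf : MemHs t' f) : MemHs t f := by
  apply Summable.of_nonneg_of_le (fun n => by positivity) (fun n => ?_) hf
  have : ((1:ℝ) + (n:ℝ)^2) ^ t ≤ (1 + (n:ℝ)^2) ^ t' :=
    Real.rpow_le_rpow_of_exponent_le (by nlinarith [sq_nonneg ((n:ℝ))]) h
  exact mul_le_mul_of_nonneg_right this (by positivity)

lemma memHs_sub {t : ℝ} {u v : Torus → ℝ} (hu' : Continuous u) (hv' : Continuous v)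
    (hu : MemHs t u) (hv : MemHs t v) : MemHs t (fun x => u x - v x) := by
  apply Summable.of_nonneg_of_le (fun n => by positivity) (fun n => ?_)
    ((hu.mul_left 2).add (hv.mul_left 2))
  have h2 : ‖FC (fun x => u x - v x) n‖ ^ 2 ≤ 2 * ‖FC u n‖^2 + 2 * ‖FC v n‖^2 := by
    rw [FC_sub hu' hv']
    have := norm_sub_le (FC u n) (FC v n)
    nlinarith [norm_nonneg (FC u n), norm_nonneg (FC v n), norm_nonneg (FC u n - FC v n),
      mul_self_le_mul_self (norm_nonneg (FC u n - FC v n)) this,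
      sq_nonneg (‖FC u n‖ - ‖FC v n‖)]
  have hj : (0:ℝ) ≤ (1 + (n:ℝ)^2) ^ t := by positivity
  calc (1 + (n:ℝ)^2) ^ t * ‖FC (fun x => u x - v x) n‖ ^ 2
      ≤ (1 + (n:ℝ)^2) ^ t * (2 * ‖FC u n‖^2 + 2 * ‖FC v n‖^2) :=
        mul_le_mul_of_nonneg_left h2 hj
    _ = 2 * ((1 + (n:ℝ)^2) ^ t * ‖FC u n‖^2) + 2 * ((1 + (n:ℝ)^2) ^ t * ‖FC v n‖^2) := by ring

lemma summable_D {t : ℝ} (ht : 0 ≤ t) {f : Torus → ℝ} (hf : MemHs t f) :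
    Summable (fun n : ℤ => |(n:ℝ)| ^ (2*t) * ‖FC f n‖^2) := by
  apply Summable.of_nonneg_of_le (fun n => by positivity) (fun n => ?_) hf
  exact mul_le_mul_of_nonneg_right (abs_rpow_le n ht) (by positivity)

lemma rpow_two_eq (x : ℝ≥0∞) : x ^ (2:ℝ) = x ^ (2:ℕ) := by
  rw [← ENNReal.rpow_natCast x 2]; norm_num

lemma eDs_eq {t : ℝ} (ht : 0 ≤ t) {f : Torus → ℝ}
    (hf : Summable (fun n : ℤ => |(n:ℝ)| ^ (2*t) * ‖FC f n‖^2)) :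
    (∑' n : ℤ, An n ^ (2*t) * Wf f n ^ (2:ℝ)) = ENNReal.ofReal (DsNorm t f ^ 2) := by
  have hsq : DsNorm t f ^ 2 = ∑' n : ℤ, |(n:ℝ)| ^ (2*t) * ‖FC f n‖^2 :=
    Real.sq_sqrt (tsum_nonneg (fun n => by positivity))
  rw [hsq, ENNReal.ofReal_tsum_of_nonneg (fun n => by positivity) hf]
  refine tsum_congr (fun n => ?_)
  rw [ENNReal.ofReal_mul (by positivity), An, ← ofReal_rpow (abs_nonneg _) (by linarith),
    Wf, rpow_two_eq, ← ENNReal.ofReal_pow (norm_nonneg _)]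

lemma eHs_eq {t : ℝ} {f : Torus → ℝ} (hf : MemHs t f) :
    (∑' n : ℤ, Jn n ^ t * Wf f n ^ (2:ℝ)) = ENNReal.ofReal (HsNorm t f ^ 2) := by
  have hsq : HsNorm t f ^ 2 = ∑' n : ℤ, (1 + (n:ℝ)^2) ^ t * ‖FC f n‖^2 :=
    Real.sq_sqrt (tsum_nonneg (fun n => by positivity))
  rw [hsq, ENNReal.ofReal_tsum_of_nonneg (fun n => by positivity) hf]
  refine tsum_congr (fun n => ?_)
  rw [ENNReal.ofReal_mul (by positivity), Jn, ← ENNReal.ofReal_rpow_of_pos (by positivity),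
    Wf, rpow_two_eq, ← ENNReal.ofReal_pow (norm_nonneg _)]

lemma DsNorm_zero_eq (f : Torus → ℝ) : DsNorm 0 f = HsNorm 0 f := by
  unfold DsNorm HsNorm
  congr 1
  exact tsum_congr (fun n => by norm_num)

/-- Interpolation for the homogeneous sums. -/
lemma interpD (W : ℤ → ℝ≥0∞) {t c : ℝ} (ht : 0 ≤ t) (htc : t ≤ c) (hc : 0 < c) :
    (∑' n : ℤ, An n ^ (2*t) * W n) ≤
      (∑' n : ℤ, An n ^ (2*c) * W n) ^ (t/c) * (∑' n : ℤ, W n) ^ (1 - t/c) := by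
  have h := interp (fun n => An n ^ (2*c) * W n) W (θ := t/c)
    (by positivity) (by rw [div_le_one hc]; exact htc)
  refine le_trans (le_of_eq (tsum_congr fun n => ?_)) h
  rw [ENNReal.mul_rpow_of_nonneg _ _ (by positivity), ← ENNReal.rpow_mul]
  have h2 : 2 * c * (t / c) = 2 * t := by field_simp
  rw [h2, mul_assoc]
  congr 1
  rw [← ENNReal.rpow_add_of_nonneg _ _ (by positivity)
    (by rw [sub_nonneg, div_le_one hc]; exact htc)]
  rw [show t/c + (1 - t/c) = 1 by ring, ENNReal.rpow_one]

/-- Cauchy–Schwarz with a shift. -/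
lemma csShift (W : ℤ → ℝ≥0∞) (a b : ℝ) (n : ℤ) :
    (∑' m : ℤ, (An m ^ a * W m) * (An (-n-m) ^ b * W (-n-m)))
      ≤ (∑' m : ℤ, An m ^ (2*a) * W m ^ (2:ℝ)) ^ (1/2:ℝ)
        * (∑' m : ℤ, An m ^ (2*b) * W m ^ (2:ℝ)) ^ (1/2:ℝ) := by
  have hsq : ∀ (c : ℝ) (j : ℤ), (An j ^ c * W j) ^ (2:ℝ) = An j ^ (2*c) * W j ^ (2:ℝ) := by
    intro c j
    rw [ENNReal.mul_rpow_of_nonneg _ _ (by norm_num), ← ENNReal.rpow_mul]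
    ring_nf
  have h := cauchy_schwarz (fun m => An m ^ a * W m) (fun m => An (-n-m) ^ b * W (-n-m))
  have hre : (∑' m : ℤ, (An (-n-m) ^ b * W (-n-m)) ^ (2:ℝ))
      = ∑' m : ℤ, (An m ^ b * W m) ^ (2:ℝ) :=
    (Equiv.subLeft (-n)).tsum_eq (fun j => (An j ^ b * W j) ^ (2:ℝ))
  rw [hre] at h
  simpa only [hsq] using h

end Aux15

namespace Aux15b
open Aux15

def DS (f : Torus → ℝ) (t : ℝ) : ℝ≥0∞ := ∑' n : ℤ, An n ^ (2*t) * Wf f n ^ (2:ℝ)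

lemma DS_eq {t : ℝ} (ht : 0 ≤ t) {f : Torus → ℝ}
    (hf : Summable (fun n : ℤ => |(n:ℝ)| ^ (2*t) * ‖FC f n‖^2)) :
    DS f t = ENNReal.ofReal (DsNorm t f ^ 2) := eDs_eq ht hf

lemma DS_zero (f : Torus → ℝ) : DS f 0 = ∑' n : ℤ, Wf f n ^ (2:ℝ) :=
  tsum_congr fun n => by rw [mul_zero, ENNReal.rpow_zero, one_mul]

lemma csShift_DS (f : Torus → ℝ) (a b : ℝ) (n : ℤ) :
    (∑' m : ℤ, (An m ^ a * Wf f m) * (An (-n-m) ^ b * Wf f (-n-m)))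
      ≤ DS f a ^ (1/2:ℝ) * DS f b ^ (1/2:ℝ) :=
  csShift (Wf f) a b n

lemma interp_DS (f : Torus → ℝ) {t c : ℝ} (ht : 0 ≤ t) (htc : t ≤ c) (hc : 0 < c) :
    DS f t ≤ DS f c ^ (t/c) * DS f 0 ^ (1 - t/c) := by
  have h := interpD (fun n => Wf f n ^ (2:ℝ)) ht htc hc
  rw [DS_zero]
  exact h

lemma DS_le_Hs {t : ℝ} (ht : 0 ≤ t) {f : Torus → ℝ} (hf : MemHs t f) :
    DS f t ≤ ENNReal.ofReal (HsNorm t f ^ 2) := by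
  rw [← eHs_eq hf]
  refine ENNReal.tsum_le_tsum (fun n => ?_)
  refine mul_le_mul_left ?_ _
  rw [An, ofReal_rpow (abs_nonneg _) (by linarith), Jn,
    ENNReal.ofReal_rpow_of_pos (by positivity)]
  exact ENNReal.ofReal_le_ofReal (abs_rpow_le n ht)

lemma rpow_half_mul_self (x : ℝ≥0∞) : x ^ (1/2:ℝ) * x ^ (1/2:ℝ) = x := by
  rw [← ENNReal.rpow_add_of_nonneg _ _ (by norm_num) (by norm_num)]
  norm_num

lemma rpow_comb (x y : ℝ≥0∞) {a b c d : ℝ} (ha : 0 ≤ a) (hb : 0 ≤ b) (hc : 0 ≤ c) (hd : 0 ≤ d) :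
    (x ^ a * y ^ b) ^ (1/2:ℝ) * (x ^ c * y ^ d) ^ (1/2:ℝ) = x ^ ((a+c)/2) * y ^ ((b+d)/2) := by
  rw [ENNReal.mul_rpow_of_nonneg _ _ (by norm_num), ENNReal.mul_rpow_of_nonneg _ _ (by norm_num),
    ← ENNReal.rpow_mul, ← ENNReal.rpow_mul, ← ENNReal.rpow_mul, ← ENNReal.rpow_mul,
    mul_mul_mul_comm,
    ← ENNReal.rpow_add_of_nonneg _ _ (mul_nonneg ha (by norm_num)) (mul_nonneg hc (by norm_num)),
    ← ENNReal.rpow_add_of_nonneg _ _ (mul_nonneg hb (by norm_num)) (mul_nonneg hd (by norm_num))]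
  congr 1 <;> ring

lemma ofReal_sq_rpow_half {x : ℝ} (hx : 0 ≤ x) :
    ENNReal.ofReal (x^2) ^ ((1:ℝ)/2) = ENNReal.ofReal x := by
  rw [ofReal_rpow (by positivity) (by norm_num)]
  congr 1
  rw [← Real.rpow_natCast x 2, ← Real.rpow_mul hx]
  norm_num

/-- The per-term bound. -/
lemma term_bound (u w : Torus → ℝ) {s : ℝ} (hs : 1 ≤ s) (n m : ℤ) :
    (‖symDx n ^ 4 * FC u n * (symH m * symD s m * FC w m)
        * (symH (-n - m) * symD (s - 1) (-n - m) * FC w (-n - m))‖₊ : ℝ≥0∞)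
      ≤ An n ^ (3:ℕ) * Wf u n *
        ((An m ^ (s+1) * Wf w m) * (An (-n-m) ^ (s-1) * Wf w (-n-m))
          + (An m ^ s * Wf w m) * (An (-n-m) ^ s * Wf w (-n-m))) := by
  set k : ℤ := -n - m with hk
  have hWf : ∀ (f : Torus → ℝ) (j : ℤ), (‖FC f j‖₊ : ℝ≥0∞) = Wf f j :=
    fun f j => (ofReal_norm_eq_coe_nnnorm _).symm
  have hDxe : (‖symDx n‖₊ : ℝ≥0∞) = An n := by
    rw [← ofReal_norm_eq_coe_nnnorm, symDx, norm_mul, Complex.norm_I, one_mul,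
      Complex.norm_intCast, An]
  have hsH : ∀ j : ℤ, (‖symH j‖₊ : ℝ≥0∞) ≤ 1 := by
    intro j
    rw [← ofReal_norm_eq_coe_nnnorm, ← ENNReal.ofReal_one]
    apply ENNReal.ofReal_le_ofReal
    rw [symH, norm_mul, norm_neg, Complex.norm_I, one_mul, Complex.norm_intCast]
    rcases lt_trichotomy j 0 with h|h|h <;>
      simp [Int.sign_eq_neg_one_of_neg, Int.sign_eq_one_of_pos, h]
  have hsD : ∀ (t : ℝ), 0 ≤ t → ∀ j : ℤ, (‖symD t j‖₊ : ℝ≥0∞) = An j ^ t := by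
    intro t htt j
    rw [← ofReal_norm_eq_coe_nnnorm, symD, Complex.norm_real, Real.norm_eq_abs,
      _root_.abs_of_nonneg (Real.rpow_nonneg (abs_nonneg _) _), An, ofReal_rpow (abs_nonneg _) htt]
  have hAtri : An n ≤ An m + An k := by
    rw [An, An, An, ← ENNReal.ofReal_add (abs_nonneg _) (abs_nonneg _)]
    apply ENNReal.ofReal_le_ofReal
    have h : (n:ℝ) = -((m:ℝ) + (k:ℝ)) := by
      have : k = -n - m := hk
      push_cast [this]; ring
    calc |(n:ℝ)| = |(m:ℝ) + (k:ℝ)| := by rw [h, abs_neg]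
      _ ≤ |(m:ℝ)| + |(k:ℝ)| := abs_add_le _ _
  have hpow : ∀ (j : ℤ) (t : ℝ), 0 ≤ t → An j * An j ^ t = An j ^ (t+1) := by
    intro j t htt
    rw [ENNReal.rpow_add_of_nonneg t 1 htt zero_le_one, ENNReal.rpow_one]
    ring
  calc (‖symDx n ^ 4 * FC u n * (symH m * symD s m * FC w m)
        * (symH k * symD (s - 1) k * FC w k)‖₊ : ℝ≥0∞)
      = ((‖symDx n‖₊ : ℝ≥0∞))^(4:ℕ) * (‖FC u n‖₊ : ℝ≥0∞)
        * ((‖symH m‖₊ : ℝ≥0∞) * (‖symD s m‖₊ : ℝ≥0∞) * (‖FC w m‖₊ : ℝ≥0∞))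
        * ((‖symH k‖₊ : ℝ≥0∞) * (‖symD (s-1) k‖₊ : ℝ≥0∞) * (‖FC w k‖₊ : ℝ≥0∞)) := by
        simp [nnnorm_mul, nnnorm_pow, ENNReal.coe_mul, ENNReal.coe_pow]
    _ = An n ^ (4:ℕ) * Wf u n
        * ((‖symH m‖₊ : ℝ≥0∞) * (An m ^ s * Wf w m))
        * ((‖symH k‖₊ : ℝ≥0∞) * (An k ^ (s-1) * Wf w k)) := by
        rw [hDxe, hWf, hWf, hWf, hsD s (by linarith) m, hsD (s-1) (by linarith) k]
        ring
    _ ≤ An n ^ (4:ℕ) * Wf u n * (1 * (An m ^ s * Wf w m)) * (1 * (An k ^ (s-1) * Wf w k)) := by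
        gcongr
        · exact hsH m
        · exact hsH k
    _ = An n ^ (3:ℕ) * An n * Wf u n * ((An m ^ s * Wf w m) * (An k ^ (s-1) * Wf w k)) := by
        ring
    _ ≤ An n ^ (3:ℕ) * (An m + An k) * Wf u n * ((An m ^ s * Wf w m) * (An k ^ (s-1) * Wf w k)) := by
        gcongr
    _ = An n ^ (3:ℕ) * Wf u n *
        ((An m * An m ^ s) * Wf w m * (An k ^ (s-1) * Wf w k)
          + (An m ^ s * Wf w m) * ((An k * An k ^ (s-1)) * Wf w k)) := by
        ring
    _ = An n ^ (3:ℕ) * Wf u n *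
        ((An m ^ (s+1) * Wf w m) * (An k ^ (s-1) * Wf w k)
          + (An m ^ s * Wf w m) * (An k ^ s * Wf w k)) := by
        rw [hpow m s (by linarith), hpow k (s-1) (by linarith),
          show s - 1 + 1 = s from by ring]

end Aux15b

/-- viscous-term estimate
`|ε∫∂ₓ⁴u (HD^s w)(HD^{s−1}w)| ≤ (ε^p/100)‖D^{s+2}w‖² + C‖u‖_{H^{s₀}}^q‖w‖² + C‖u‖_{H^{s₀}}‖w‖_{H^s}²`
with `p = 2(s+2)/(2(s+2)−4)`, `q = 2(s+2)/4`, `w = u − v` (the trilinear integral written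
spectrally: `∫fgh = ∑_{n+m+k=0} f̂(n)ĝ(m)ĥ(k)`). -/
theorem statement15 (s s₀ : ℝ) (hs : 1 ≤ s) (hs₀ : 7 / 2 < s₀) :
    ∃ C > (0 : ℝ), ∀ ε : ℝ, 0 ≤ ε → ε ≤ 1 → ∀ u v : Torus → ℝ,
      Continuous u → MemHs (max (s + 2) s₀) u →
      Continuous v → MemHs (max (s + 2) s₀) v →
      |ε * (∑' n : ℤ, ∑' m : ℤ,
          symDx n ^ 4 * FC u n
            * (symH m * symD s m * FC (fun x => u x - v x) m)
            * (symH (-n - m) * symD (s - 1) (-n - m)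
                * FC (fun x => u x - v x) (-n - m))).re| ≤
        ε ^ (2 * (s + 2) / (2 * (s + 2) - 4)) / 100
            * DsNorm (s + 2) (fun x => u x - v x) ^ 2
          + C * HsNorm s₀ u ^ (2 * (s + 2) / 4) * HsNorm 0 (fun x => u x - v x) ^ 2
          + C * HsNorm s₀ u * HsNorm s (fun x => u x - v x) ^ 2 := by
  have hs2 : (0:ℝ) < s + 2 := by linarith
  have hs0 : (0:ℝ) < s := by linarith
  have hK2 : Summable (fun n : ℤ => (1+(n:ℝ)^2) ^ ((3:ℝ)-s₀)) :=
    Aux15.summable_jp (by linarith)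
  set C₀ : ℝ := Real.sqrt (∑' n : ℤ, (1+(n:ℝ)^2) ^ ((3:ℝ)-s₀)) with hC₀def
  have hC₀ : 0 ≤ C₀ := Real.sqrt_nonneg _
  refine ⟨(100*(C₀+1)) ^ (2*(s+2)/4) + C₀ + 1, by positivity, ?_⟩
  intro ε hε0 hε1 u v hu hmu hv hmv
  set p : ℝ := 2*(s+2)/(2*(s+2)-4) with hpdef
  set q : ℝ := 2*(s+2)/4 with hqdef
  have hpeq : p = (s+2)/s := by
    rw [hpdef, show 2*(s+2)-4 = 2*s from by ring, mul_div_mul_left _ _ (two_ne_zero)]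
  have hqeq : q = (s+2)/2 := by rw [hqdef]; ring
  have hp1 : 1 < p := by rw [hpeq, lt_div_iff₀ hs0]; linarith
  have hq1 : 1 < q := by rw [hqeq]; rw [lt_div_iff₀ (by norm_num : (0:ℝ) < 2)]; linarith
  have hpq : p.HolderConjugate q := by
    rw [Real.holderConjugate_iff]; constructor
    · exact hp1
    · rw [hpeq, hqeq]; field_simp
  set w : Torus → ℝ := fun x => u x - v x with hwdef
  set X : ℝ := DsNorm (s+2) w with hXdef
  set L : ℝ := HsNorm 0 w with hLdef
  set Hw : ℝ := HsNorm s w with hHwdef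
  set Hu : ℝ := HsNorm s₀ u with hHudef
  have hX0 : 0 ≤ X := Real.sqrt_nonneg _
  have hL0 : 0 ≤ L := Real.sqrt_nonneg _
  have hHw0 : 0 ≤ Hw := Real.sqrt_nonneg _
  have hHu0 : 0 ≤ Hu := Real.sqrt_nonneg _
  -- membership
  have hmu0 : MemHs s₀ u := Aux15.memHs_mono (le_max_right _ _) hmu
  have hmw2 : MemHs (s+2) w :=
    Aux15.memHs_sub hu hv (Aux15.memHs_mono (le_max_left _ _) hmu)
      (Aux15.memHs_mono (le_max_left _ _) hmv)
  have hmw0 : MemHs 0 w := Aux15.memHs_mono (by linarith) hmw2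
  have hmws : MemHs s w := Aux15.memHs_mono (by linarith) hmw2
  -- ennreal identities
  have hDE : Aux15b.DS w (s+2) = ENNReal.ofReal (X ^ 2) :=
    Aux15b.DS_eq (by linarith) (Aux15.summable_D (by linarith) hmw2)
  have hDZ : Aux15b.DS w 0 = ENNReal.ofReal (L ^ 2) := by
    rw [Aux15b.DS_eq le_rfl (Aux15.summable_D le_rfl hmw0), Aux15.DsNorm_zero_eq]
  have hDs_le : Aux15b.DS w s ≤ ENNReal.ofReal (Hw ^ 2) := Aux15b.DS_le_Hs (by linarith) hmws
  -- the inner-sum bound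
  set M : ℝ≥0∞ := ENNReal.ofReal (X ^ (2*s/(s+2)) * L ^ (4/(s+2)) + Hw ^ 2) with hMdef
  have hfrac1 : (0:ℝ) ≤ 1 - (s+1)/(s+2) := by
    rw [sub_nonneg, div_le_one hs2]; linarith
  have hfrac2 : (0:ℝ) ≤ 1 - (s-1)/(s+2) := by
    rw [sub_nonneg, div_le_one hs2]; linarith
  have hM : ∀ n : ℤ, (∑' m : ℤ,
      ((Aux15.An m ^ (s+1) * Aux15.Wf w m) * (Aux15.An (-n-m) ^ (s-1) * Aux15.Wf w (-n-m))
        + (Aux15.An m ^ s * Aux15.Wf w m) * (Aux15.An (-n-m) ^ s * Aux15.Wf w (-n-m))))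
      ≤ M := by
    intro n
    rw [ENNReal.tsum_add]
    have h1 := Aux15b.csShift_DS w (s+1) (s-1) n
    have h2 := (Aux15b.csShift_DS w s s n).trans_eq (Aux15b.rpow_half_mul_self _)
    have hi1 : Aux15b.DS w (s+1) ≤
        Aux15b.DS w (s+2) ^ ((s+1)/(s+2)) * Aux15b.DS w 0 ^ (1 - (s+1)/(s+2)) :=
      Aux15b.interp_DS w (by linarith) (by linarith) hs2
    have hi2 : Aux15b.DS w (s-1) ≤
        Aux15b.DS w (s+2) ^ ((s-1)/(s+2)) * Aux15b.DS w 0 ^ (1 - (s-1)/(s+2)) :=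
      Aux15b.interp_DS w (by linarith) (by linarith) hs2
    have h1' : Aux15b.DS w (s+1) ^ (1/2:ℝ) * Aux15b.DS w (s-1) ^ (1/2:ℝ)
        ≤ Aux15b.DS w (s+2) ^ (s/(s+2)) * Aux15b.DS w 0 ^ (2/(s+2)) := by
      calc Aux15b.DS w (s+1) ^ (1/2:ℝ) * Aux15b.DS w (s-1) ^ (1/2:ℝ)
          ≤ (Aux15b.DS w (s+2) ^ ((s+1)/(s+2)) * Aux15b.DS w 0 ^ (1 - (s+1)/(s+2))) ^ (1/2:ℝ)
            * (Aux15b.DS w (s+2) ^ ((s-1)/(s+2)) * Aux15b.DS w 0 ^ (1 - (s-1)/(s+2))) ^ (1/2:ℝ) := by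
            gcongr
        _ = Aux15b.DS w (s+2) ^ (((s+1)/(s+2) + (s-1)/(s+2))/2)
            * Aux15b.DS w 0 ^ (((1-(s+1)/(s+2)) + (1-(s-1)/(s+2)))/2) :=
            Aux15b.rpow_comb _ _ (div_nonneg (by linarith) (by linarith)) hfrac1 (div_nonneg (by linarith) (by linarith)) hfrac2
        _ = Aux15b.DS w (s+2) ^ (s/(s+2)) * Aux15b.DS w 0 ^ (2/(s+2)) := by
            congr 1
            · congr 1; field_simp; ring
            · congr 1; field_simp; ring
    have hXr : Aux15b.DS w (s+2) ^ (s/(s+2)) = ENNReal.ofReal (X ^ (2*s/(s+2))) := by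
      rw [hDE, Aux15.ofReal_rpow (by positivity) (div_nonneg (by linarith) (by linarith))]
      congr 1
      rw [← Real.rpow_natCast X 2, ← Real.rpow_mul hX0]
      congr 1
      push_cast
      ring
    have hLr : Aux15b.DS w 0 ^ (2/(s+2)) = ENNReal.ofReal (L ^ (4/(s+2))) := by
      rw [hDZ, Aux15.ofReal_rpow (by positivity) (div_nonneg (by norm_num) (by linarith))]
      congr 1
      rw [← Real.rpow_natCast L 2, ← Real.rpow_mul hL0]
      congr 1
      push_cast
      ring
    calc (∑' m : ℤ,
        (Aux15.An m ^ (s+1) * Aux15.Wf w m) * (Aux15.An (-n-m) ^ (s-1) * Aux15.Wf w (-n-m)))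
        + (∑' m : ℤ,
        (Aux15.An m ^ s * Aux15.Wf w m) * (Aux15.An (-n-m) ^ s * Aux15.Wf w (-n-m)))
        ≤ Aux15b.DS w (s+1) ^ (1/2:ℝ) * Aux15b.DS w (s-1) ^ (1/2:ℝ) + Aux15b.DS w s :=
          add_le_add h1 h2
      _ ≤ Aux15b.DS w (s+2) ^ (s/(s+2)) * Aux15b.DS w 0 ^ (2/(s+2))
          + ENNReal.ofReal (Hw ^ 2) := add_le_add h1' hDs_le
      _ = ENNReal.ofReal (X ^ (2*s/(s+2))) * ENNReal.ofReal (L ^ (4/(s+2)))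
          + ENNReal.ofReal (Hw ^ 2) := by rw [hXr, hLr]
      _ = M := by
          rw [hMdef, ← ENNReal.ofReal_mul (Real.rpow_nonneg hX0 _),
            ← ENNReal.ofReal_add (mul_nonneg (Real.rpow_nonneg hX0 _) (Real.rpow_nonneg hL0 _))
              (sq_nonneg _)]
  -- the outer sum bound
  have houter : (∑' n : ℤ, Aux15.An n ^ (3:ℕ) * Aux15.Wf u n)
      ≤ ENNReal.ofReal C₀ * ENNReal.ofReal Hu := by
    have hterm : ∀ n : ℤ, Aux15.An n ^ (3:ℕ) * Aux15.Wf u n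
        ≤ Aux15.Jn n ^ (((3:ℝ)-s₀)/2) * (Aux15.Jn n ^ (s₀/2) * Aux15.Wf u n) := by
      intro n
      have hJ3 : Aux15.An n ^ (3:ℕ) ≤ Aux15.Jn n ^ ((3:ℝ)/2) := by
        rw [Aux15.An, ← ENNReal.ofReal_pow (abs_nonneg _), Aux15.Jn,
          ENNReal.ofReal_rpow_of_pos (by positivity)]
        apply ENNReal.ofReal_le_ofReal
        have h := Aux15.abs_rpow_le n (t := 3/2) (by norm_num)
        rw [show (2*((3:ℝ)/2)) = 3 from by ring] at h
        refine le_trans (le_of_eq ?_) h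
        rw [← Real.rpow_natCast |(n:ℝ)| 3]
        norm_num
      have hsplit : Aux15.Jn n ^ (((3:ℝ)-s₀)/2) * (Aux15.Jn n ^ (s₀/2) * Aux15.Wf u n)
          = Aux15.Jn n ^ ((3:ℝ)/2) * Aux15.Wf u n := by
        rw [← mul_assoc, ← ENNReal.rpow_add _ _ (Aux15.Jn_ne_zero n) (Aux15.Jn_ne_top n),
          show ((3:ℝ)-s₀)/2 + s₀/2 = 3/2 from by ring]
      rw [hsplit]
      exact mul_le_mul_left hJ3 _
    have hcs := Aux15.cauchy_schwarz (fun n => Aux15.Jn n ^ (((3:ℝ)-s₀)/2))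
      (fun n => Aux15.Jn n ^ (s₀/2) * Aux15.Wf u n)
    have hf2 : ∀ n : ℤ, (Aux15.Jn n ^ (((3:ℝ)-s₀)/2)) ^ (2:ℝ) = Aux15.Jn n ^ ((3:ℝ)-s₀) := by
      intro n
      rw [← ENNReal.rpow_mul]
      congr 1; ring
    have hg2 : ∀ n : ℤ, (Aux15.Jn n ^ (s₀/2) * Aux15.Wf u n) ^ (2:ℝ)
        = Aux15.Jn n ^ s₀ * Aux15.Wf u n ^ (2:ℝ) := by
      intro n
      rw [ENNReal.mul_rpow_of_nonneg _ _ (by norm_num), ← ENNReal.rpow_mul]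
      congr 2; ring
    simp only [hf2, hg2] at hcs
    have hsum1 : (∑' n : ℤ, Aux15.Jn n ^ ((3:ℝ)-s₀)) = ENNReal.ofReal (C₀^2) := by
      have he : ∀ n : ℤ, Aux15.Jn n ^ ((3:ℝ)-s₀)
          = ENNReal.ofReal ((1+(n:ℝ)^2) ^ ((3:ℝ)-s₀)) :=
        fun n => by rw [Aux15.Jn, ENNReal.ofReal_rpow_of_pos (by positivity)]
      rw [tsum_congr he, ← ENNReal.ofReal_tsum_of_nonneg (fun n => by positivity) hK2]
      congr 1
      rw [hC₀def, Real.sq_sqrt (tsum_nonneg fun n => by positivity)]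
    have hsum2 : (∑' n : ℤ, Aux15.Jn n ^ s₀ * Aux15.Wf u n ^ (2:ℝ))
        = ENNReal.ofReal (Hu^2) := Aux15.eHs_eq hmu0
    rw [hsum1, hsum2, Aux15b.ofReal_sq_rpow_half hC₀, Aux15b.ofReal_sq_rpow_half hHu0] at hcs
    exact le_trans (ENNReal.tsum_le_tsum hterm) hcs
  -- master chain
  set S : ℂ := ∑' (n : ℤ), ∑' (m : ℤ),
      symDx n ^ 4 * FC u n * (symH m * symD s m * FC w m) *
        (symH (-n - m) * symD (s - 1) (-n - m) * FC w (-n - m)) with hSdef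
  have hchain : (‖S‖₊ : ℝ≥0∞)
      ≤ ENNReal.ofReal (C₀ * Hu * (X ^ (2*s/(s+2)) * L ^ (4/(s+2)) + Hw ^ 2)) := by
    calc (‖S‖₊ : ℝ≥0∞)
        ≤ ∑' n : ℤ, (‖∑' m : ℤ, symDx n ^ 4 * FC u n * (symH m * symD s m * FC w m) *
            (symH (-n - m) * symD (s - 1) (-n - m) * FC w (-n - m))‖₊ : ℝ≥0∞) :=
          Aux15.enorm_tsum_le _
      _ ≤ ∑' n : ℤ, ∑' m : ℤ, (‖symDx n ^ 4 * FC u n * (symH m * symD s m * FC w m) *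
            (symH (-n - m) * symD (s - 1) (-n - m) * FC w (-n - m))‖₊ : ℝ≥0∞) :=
          ENNReal.tsum_le_tsum fun n => Aux15.enorm_tsum_le _
      _ ≤ ∑' n : ℤ, ∑' m : ℤ, (Aux15.An n ^ (3:ℕ) * Aux15.Wf u n *
            ((Aux15.An m ^ (s+1) * Aux15.Wf w m) * (Aux15.An (-n-m) ^ (s-1) * Aux15.Wf w (-n-m))
              + (Aux15.An m ^ s * Aux15.Wf w m) * (Aux15.An (-n-m) ^ s * Aux15.Wf w (-n-m)))) :=
          ENNReal.tsum_le_tsum fun n => ENNReal.tsum_le_tsum fun m =>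
            Aux15b.term_bound u w hs n m
      _ = ∑' n : ℤ, (Aux15.An n ^ (3:ℕ) * Aux15.Wf u n) * (∑' m : ℤ,
            ((Aux15.An m ^ (s+1) * Aux15.Wf w m) * (Aux15.An (-n-m) ^ (s-1) * Aux15.Wf w (-n-m))
              + (Aux15.An m ^ s * Aux15.Wf w m) * (Aux15.An (-n-m) ^ s * Aux15.Wf w (-n-m)))) :=
          tsum_congr fun n => ENNReal.tsum_mul_left
      _ ≤ ∑' n : ℤ, (Aux15.An n ^ (3:ℕ) * Aux15.Wf u n) * M :=
          ENNReal.tsum_le_tsum fun n => mul_le_mul_right (hM n) _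
      _ = (∑' n : ℤ, Aux15.An n ^ (3:ℕ) * Aux15.Wf u n) * M := ENNReal.tsum_mul_right
      _ ≤ (ENNReal.ofReal C₀ * ENNReal.ofReal Hu) * M := mul_le_mul_left houter _
      _ = ENNReal.ofReal (C₀ * Hu * (X ^ (2*s/(s+2)) * L ^ (4/(s+2)) + Hw ^ 2)) := by
          rw [hMdef, ← ENNReal.ofReal_mul hC₀, ← ENNReal.ofReal_mul (mul_nonneg hC₀ hHu0)]
  -- back to the reals
  have hB0 : 0 ≤ C₀ * Hu * (X ^ (2*s/(s+2)) * L ^ (4/(s+2)) + Hw ^ 2) :=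
    mul_nonneg (mul_nonneg hC₀ hHu0)
      (add_nonneg (mul_nonneg (Real.rpow_nonneg hX0 _) (Real.rpow_nonneg hL0 _)) (sq_nonneg _))
  have hSnorm : ‖S‖ ≤ C₀ * Hu * (X ^ (2*s/(s+2)) * L ^ (4/(s+2)) + Hw ^ 2) := by
    have h1 := ENNReal.toReal_mono ENNReal.ofReal_ne_top hchain
    rw [ENNReal.toReal_ofReal hB0] at h1
    simpa using h1
  have habs : |ε * S.re| ≤ ε * ‖S‖ := by
    rw [abs_mul, _root_.abs_of_nonneg hε0]
    exact mul_le_mul_of_nonneg_left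
      ((Complex.abs_re_le_norm S).trans_eq rfl) hε0
  -- Young's inequality step
  have hyoung : ε * (C₀ * Hu * (X ^ (2*s/(s+2)) * L ^ (4/(s+2))))
      ≤ ε ^ p / 100 * X ^ 2 + (100*(C₀+1)) ^ q * (Hu ^ q * L ^ 2) := by
    have ha : 0 ≤ ε * X ^ (2*s/(s+2)) / 100 :=
      div_nonneg (mul_nonneg hε0 (Real.rpow_nonneg hX0 _)) (by norm_num)
    have hb : 0 ≤ 100 * (C₀ * (Hu * L ^ (4/(s+2)))) :=
      mul_nonneg (by norm_num) (mul_nonneg hC₀ (mul_nonneg hHu0 (Real.rpow_nonneg hL0 _)))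
    have hY := Real.young_inequality_of_nonneg ha hb hpq
    have hid : (ε * X ^ (2*s/(s+2)) / 100) * (100 * (C₀ * (Hu * L ^ (4/(s+2)))))
        = ε * (C₀ * Hu * (X ^ (2*s/(s+2)) * L ^ (4/(s+2)))) := by ring
    have hs0' : s ≠ 0 := ne_of_gt hs0
    have hs2' : s + 2 ≠ 0 := ne_of_gt hs2
    have hXp : (X ^ (2*s/(s+2))) ^ p = X ^ 2 := by
      have hexp : 2*s/(s+2) * ((s+2)/s) = 2 := by field_simp
      rw [← Real.rpow_natCast X 2, ← Real.rpow_mul hX0, hpeq, hexp]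
      norm_num
    have hLq : (L ^ (4/(s+2))) ^ q = L ^ 2 := by
      have hexp : 4/(s+2) * ((s+2)/2) = 2 := by field_simp; ring
      rw [← Real.rpow_natCast L 2, ← Real.rpow_mul hL0, hqeq, hexp]
      norm_num
    have h100 : (100:ℝ) ≤ 100 ^ p * p := by
      have h1 : (100:ℝ) = 100 ^ (1:ℝ) := by norm_num
      have h2 : (100:ℝ) ^ (1:ℝ) ≤ 100 ^ p :=
        Real.rpow_le_rpow_of_exponent_le (by norm_num) hp1.le
      nlinarith [Real.rpow_nonneg (show (0:ℝ) ≤ 100 by norm_num) p]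
    have hap : (ε * X ^ (2*s/(s+2)) / 100) ^ p / p ≤ ε ^ p / 100 * X ^ 2 := by
      rw [Real.div_rpow (mul_nonneg hε0 (Real.rpow_nonneg hX0 _)) (by norm_num),
        Real.mul_rpow hε0 (Real.rpow_nonneg hX0 _), hXp]
      rw [div_div]
      rw [div_mul_eq_mul_div, div_le_div_iff₀ (by positivity) (by norm_num)]
      have hnn : 0 ≤ ε ^ p * X ^ 2 := mul_nonneg (Real.rpow_nonneg hε0 _) (sq_nonneg _)
      nlinarith [mul_le_mul_of_nonneg_left h100 hnn]
    have hbq : (100 * (C₀ * (Hu * L ^ (4/(s+2))))) ^ q / q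
        ≤ (100*(C₀+1)) ^ q * (Hu ^ q * L ^ 2) := by
      have hqpos : (0:ℝ) < q := by linarith
      have hcoef : ((100:ℝ) * C₀) ^ q ≤ (100*(C₀+1)) ^ q :=
        Real.rpow_le_rpow (by positivity) (by linarith) hqpos.le
      have hexp : (100 * (C₀ * (Hu * L ^ (4/(s+2))))) ^ q
          = (100 * C₀) ^ q * (Hu ^ q * (L ^ (4/(s+2))) ^ q) := by
        rw [show (100:ℝ) * (C₀ * (Hu * L ^ (4/(s+2)))) = (100*C₀) * (Hu * L ^ (4/(s+2))) from
          by ring]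
        rw [Real.mul_rpow (by positivity) (mul_nonneg hHu0 (Real.rpow_nonneg hL0 _)),
          Real.mul_rpow hHu0 (Real.rpow_nonneg hL0 _)]
      rw [hexp, hLq]
      have hnn : 0 ≤ Hu ^ q * L ^ 2 := mul_nonneg (Real.rpow_nonneg hHu0 _) (sq_nonneg _)
      calc (100 * C₀) ^ q * (Hu ^ q * L ^ 2) / q ≤ (100 * C₀) ^ q * (Hu ^ q * L ^ 2) := by
            apply div_le_self (mul_nonneg (by positivity) hnn) (by linarith)
        _ ≤ (100*(C₀+1)) ^ q * (Hu ^ q * L ^ 2) := mul_le_mul_of_nonneg_right hcoef hnn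
    calc ε * (C₀ * Hu * (X ^ (2*s/(s+2)) * L ^ (4/(s+2))))
        = (ε * X ^ (2*s/(s+2)) / 100) * (100 * (C₀ * (Hu * L ^ (4/(s+2))))) := by ring
      _ ≤ (ε * X ^ (2*s/(s+2)) / 100) ^ p / p + (100 * (C₀ * (Hu * L ^ (4/(s+2))))) ^ q / q := hY
      _ ≤ ε ^ p / 100 * X ^ 2 + (100*(C₀+1)) ^ q * (Hu ^ q * L ^ 2) := add_le_add hap hbq
  -- final assembly
  have hfin2 : ε * (C₀ * Hu * Hw ^ 2)
      ≤ ((100*(C₀+1)) ^ q + C₀ + 1) * Hu * Hw ^ 2 := by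
    have hnn : 0 ≤ Hu * Hw ^ 2 := mul_nonneg hHu0 (sq_nonneg _)
    have h1 : ε * (C₀ * Hu * Hw ^ 2) ≤ C₀ * (Hu * Hw ^ 2) := by
      nlinarith [mul_nonneg hC₀ hnn]
    have h2 : C₀ ≤ (100*(C₀+1)) ^ q + C₀ + 1 := by
      nlinarith [Real.rpow_nonneg (show (0:ℝ) ≤ 100*(C₀+1) by positivity) q]
    nlinarith [mul_le_mul_of_nonneg_right h2 hnn]
  have hfin1 : (100*(C₀+1)) ^ q * (Hu ^ q * L ^ 2)
      ≤ ((100*(C₀+1)) ^ q + C₀ + 1) * Hu ^ q * L ^ 2 := by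
    have hnn : 0 ≤ Hu ^ q * L ^ 2 := mul_nonneg (Real.rpow_nonneg hHu0 _) (sq_nonneg _)
    nlinarith [mul_le_mul_of_nonneg_right
      (show (100*(C₀+1)) ^ q ≤ (100*(C₀+1)) ^ q + C₀ + 1 from by nlinarith) hnn]
  calc |ε * S.re| ≤ ε * ‖S‖ := habs
    _ ≤ ε * (C₀ * Hu * (X ^ (2*s/(s+2)) * L ^ (4/(s+2)) + Hw ^ 2)) :=
        mul_le_mul_of_nonneg_left hSnorm hε0
    _ = ε * (C₀ * Hu * (X ^ (2*s/(s+2)) * L ^ (4/(s+2)))) + ε * (C₀ * Hu * Hw ^ 2) := by ring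
    _ ≤ (ε ^ p / 100 * X ^ 2 + (100*(C₀+1)) ^ q * (Hu ^ q * L ^ 2))
        + ((100*(C₀+1)) ^ q + C₀ + 1) * Hu * Hw ^ 2 := add_le_add hyoung hfin2
    _ ≤ ε ^ p / 100 * X ^ 2 + ((100*(C₀+1)) ^ q + C₀ + 1) * Hu ^ q * L ^ 2
        + ((100*(C₀+1)) ^ q + C₀ + 1) * Hu * Hw ^ 2 := by linarith

end
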